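/- arXiv:2205.07644 — 2 statements merged into one kernel-verified Lean document; each statement's English description precedes it below -/
import Mathlib

section
/- Let D be an additive category, S a multiplicative system in D, and E : Dᵒᵖ × D → Ab an additive bifunctor. For objects A, C of D, consider triplets (t, δ, s) where t : Z ⇒ C lies in S, s : A ⇒ X lies in S, and δ ∈ E(Z, X). Define (t₁, δ₁, s₁) ∼ (t₂, δ₂, s₂) if for some common denominator — i.e., morphisms s ∈ S(A, X), t ∈ S(Z, C), u_i ∈ S(X_i, X), v_i ∈ S(Z, Z_i) with s = u_i ∘ s_i and t = t_i ∘ v_i — one has v₁*(u₁)_*δ₁ = v₂*(u₂)_*δ₂ in E(Z, X). Then this relation is independent of the choice of common denominator and is an equivalence relation. -/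
open CategoryTheory

universe v u

/-- An additive bifunctor `E : Dᵒᵖ × D ⥤ Ab`, given by its action on objects
(valued in abelian groups), pushforward along morphisms in the covariant
(second) variable and pullback along morphisms in the contravariant (first)
variable. -/
structure AddBifunctor (C : Type u) [Category.{v} C] [Preadditive C] where
  E : C → C → AddCommGrpCat.{v}
  push : ∀ {Z X X' : C}, (X ⟶ X') → E Z X → E Z X'
  pull : ∀ {Z' Z X : C}, (Z' ⟶ Z) → E Z X → E Z' X
  push_id : ∀ {Z X : C} (δ : E Z X), push (𝟙 X) δ = δ
  push_comp : ∀ {Z X X' X'' : C} (f : X ⟶ X') (g : X' ⟶ X'') (δ : E Z X),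
      push (f ≫ g) δ = push g (push f δ)
  pull_id : ∀ {Z X : C} (δ : E Z X), pull (𝟙 Z) δ = δ
  pull_comp : ∀ {Z'' Z' Z X : C} (g : Z'' ⟶ Z') (f : Z' ⟶ Z) (δ : E Z X),
      pull (g ≫ f) δ = pull g (pull f δ)
  pull_push : ∀ {Z' Z X X' : C} (c : Z' ⟶ Z) (a : X ⟶ X') (δ : E Z X),
      pull c (push a δ) = push a (pull c δ)
  push_add : ∀ {Z X X' : C} (a : X ⟶ X') (δ δ' : E Z X),
      push a (δ + δ') = push a δ + push a δ'
  pull_add : ∀ {Z' Z X : C} (c : Z' ⟶ Z) (δ δ' : E Z X),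
      pull c (δ + δ') = pull c δ + pull c δ'
  push_add_hom : ∀ {Z X X' : C} (a a' : X ⟶ X') (δ : E Z X),
      push (a + a') δ = push a δ + push a' δ
  pull_add_hom : ∀ {Z' Z X : C} (c c' : Z' ⟶ Z) (δ : E Z X),
      pull (c + c') δ = pull c δ + pull c' δ

/-- 2-out-of-3 property for a class of morphisms. -/
def TwoOutOfThree {D : Type u} [Category.{v} D] (S : MorphismProperty D) : Prop :=
  (∀ {X Y Z : D} (f : X ⟶ Y) (g : Y ⟶ Z), S f → S g → S (f ≫ g)) ∧
  (∀ {X Y Z : D} (f : X ⟶ Y) (g : Y ⟶ Z), S f → S (f ≫ g) → S g) ∧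
  (∀ {X Y Z : D} (f : X ⟶ Y) (g : Y ⟶ Z), S g → S (f ≫ g) → S f)

variable {D : Type u} [Category.{v} D] [Preadditive D]

/-- A triplet `(C ⇐t Z ⇢δ X ⇐s A)` representing an element of `Ẽ(C, A)`:
morphisms `t : Z ⟶ C` and `s : A ⟶ X` in `S` together with an extension
`δ ∈ E(Z, X)`. -/
structure Triplet (S : MorphismProperty D) (T : AddBifunctor D) (Cc A : D) where
  Z : D
  X : D
  t : Z ⟶ Cc
  s : A ⟶ X
  ht : S t
  hs : S s
  δ : T.E Z X

/-- Two triplets are equivalent if for some common denominator the pulled–pushed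
extensions agree. -/
def TripletRel (S : MorphismProperty D) (T : AddBifunctor D) (Cc A : D)
    (T₁ T₂ : Triplet S T Cc A) : Prop :=
  ∃ (Z X : D) (t : Z ⟶ Cc) (s : A ⟶ X) (u₁ : T₁.X ⟶ X) (v₁ : Z ⟶ T₁.Z)
    (u₂ : T₂.X ⟶ X) (v₂ : Z ⟶ T₂.Z),
    S t ∧ S s ∧ S u₁ ∧ S v₁ ∧ S u₂ ∧ S v₂ ∧
    s = T₁.s ≫ u₁ ∧ s = T₂.s ≫ u₂ ∧ t = v₁ ≫ T₁.t ∧ t = v₂ ≫ T₂.t ∧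
    T.pull v₁ (T.push u₁ T₁.δ) = T.pull v₂ (T.push u₂ T₂.δ)

/-!
Any two common denominators of a pair of triplets are dominated by a third one: Ore squares
compare the two, and the cancellation property of `S` makes the comparison compatible with
both legs at once. Refining both denominators to this third one shows that, if the images
agree for the first denominator, their difference for the second is killed by pulling and
pushing along morphisms of `S`, hence vanishes. Transitivity likewise glues two common
denominators along the middle triplet by Ore squares.
-/

namespace AddBifunctor

variable {T : AddBifunctor D}

lemma push_sub {Z X X' : D} (a : X ⟶ X') (δ δ' : T.E Z X) :
    T.push a (δ - δ') = T.push a δ - T.push a δ' :=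
  (AddMonoidHom.mk' (T.push a) (T.push_add a)).map_sub δ δ'

lemma pull_sub {Z' Z X : D} (c : Z' ⟶ Z) (δ δ' : T.E Z X) :
    T.pull c (δ - δ') = T.pull c δ - T.pull c δ' :=
  (AddMonoidHom.mk' (T.pull c) (T.pull_add c)).map_sub δ δ'

lemma pull_push_comp {Q Z Z₀ X₀ X P : D} (x : Q ⟶ Z) (v : Z ⟶ Z₀) (u : X₀ ⟶ X)
    (w : X ⟶ P) (δ : T.E Z₀ X₀) :
    T.pull (x ≫ v) (T.push (u ≫ w) δ) = T.pull x (T.push w (T.pull v (T.push u δ))) := by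
  rw [T.pull_comp, T.push_comp, T.pull_push]

lemma pull_push_pull_push_eq_of_comp_eq {Q Z Z' Z₀ X₀ X X' P : D}
    {x : Q ⟶ Z} {x' : Q ⟶ Z'} {v : Z ⟶ Z₀} {v' : Z' ⟶ Z₀}
    {u : X₀ ⟶ X} {u' : X₀ ⟶ X'} {w : X ⟶ P} {w' : X' ⟶ P}
    (hv : x ≫ v = x' ≫ v') (hu : u ≫ w = u' ≫ w') (δ : T.E Z₀ X₀) :
    T.pull x (T.push w (T.pull v (T.push u δ))) =
      T.pull x' (T.push w' (T.pull v' (T.push u' δ))) := by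
  rw [← pull_push_comp, ← pull_push_comp, hv, hu]

end AddBifunctor

namespace TwoOutOfThree

variable {C : Type*} [Category C] {S : MorphismProperty C}

lemma exists_comm_sq_of_span [S.HasLeftCalculusOfFractions] (h23 : TwoOutOfThree S)
    {X₀ X X' : C} {u : X₀ ⟶ X} {u' : X₀ ⟶ X'} (hu : S u) (hu' : S u') :
    ∃ (P : C) (w : X ⟶ P) (w' : X' ⟶ P), S w ∧ S w' ∧ u ≫ w = u' ≫ w' := by
  obtain ⟨ψ, fac⟩ := MorphismProperty.HasLeftCalculusOfFractions.exists_leftFraction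
    (MorphismProperty.RightFraction.mk u hu u')
  exact ⟨ψ.Y', ψ.f, ψ.s, h23.2.1 u ψ.f hu (fac ▸ S.comp_mem _ _ hu' ψ.hs), ψ.hs, fac.symm⟩

lemma exists_comm_sq_of_cospan [S.HasRightCalculusOfFractions] (h23 : TwoOutOfThree S)
    {Z Z' Z₀ : C} {v : Z ⟶ Z₀} {v' : Z' ⟶ Z₀} (hv : S v) (hv' : S v') :
    ∃ (Q : C) (x : Q ⟶ Z) (x' : Q ⟶ Z'), S x ∧ S x' ∧ x ≫ v = x' ≫ v' := by
  obtain ⟨ψ, fac⟩ := MorphismProperty.HasRightCalculusOfFractions.exists_rightFraction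
    (MorphismProperty.LeftFraction.mk v' v hv)
  exact ⟨ψ.X', ψ.f, ψ.s, h23.2.2 ψ.f v hv (fac ▸ S.comp_mem _ _ ψ.hs hv'), ψ.hs, fac.symm⟩

/-- An Ore square equalizes `u₁` and `u₁'`; since `s₂ ∈ S`, cancellation then equalizes
`u₂` and `u₂'` as well. -/
lemma exists_comm_sq_of_span_pair [S.HasLeftCalculusOfFractions] (h23 : TwoOutOfThree S)
    {A X₁ X₂ X X' : C} {s₁ : A ⟶ X₁} {s₂ : A ⟶ X₂} {u₁ : X₁ ⟶ X} {u₂ : X₂ ⟶ X}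
    {u₁' : X₁ ⟶ X'} {u₂' : X₂ ⟶ X'} (hs₂ : S s₂) (hu₁ : S u₁) (hu₁' : S u₁')
    (h : s₁ ≫ u₁ = s₂ ≫ u₂) (h' : s₁ ≫ u₁' = s₂ ≫ u₂') :
    ∃ (P : C) (w : X ⟶ P) (w' : X' ⟶ P),
      S w' ∧ u₁ ≫ w = u₁' ≫ w' ∧ u₂ ≫ w = u₂' ≫ w' := by
  obtain ⟨P, w, w', -, hw', hsq⟩ := h23.exists_comm_sq_of_span hu₁ hu₁'
  have hs₂_eq : s₂ ≫ u₂ ≫ w = s₂ ≫ u₂' ≫ w' := by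
    rw [← Category.assoc, ← h, Category.assoc, hsq, ← Category.assoc, h', Category.assoc]
  obtain ⟨P', r, hr, hrr⟩ :=
    MorphismProperty.HasLeftCalculusOfFractions.ext _ _ s₂ hs₂ hs₂_eq
  refine ⟨P', w ≫ r, w' ≫ r, S.comp_mem _ _ hw' hr, ?_, ?_⟩
  · rw [← Category.assoc, hsq, Category.assoc]
  · simpa only [Category.assoc] using hrr

lemma exists_comm_sq_of_cospan_pair [S.HasRightCalculusOfFractions] (h23 : TwoOutOfThree S)
    {B Z₁ Z₂ Z Z' : C} {t₁ : Z₁ ⟶ B} {t₂ : Z₂ ⟶ B} {v₁ : Z ⟶ Z₁} {v₂ : Z ⟶ Z₂}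
    {v₁' : Z' ⟶ Z₁} {v₂' : Z' ⟶ Z₂} (ht₂ : S t₂) (hv₁ : S v₁) (hv₁' : S v₁')
    (h : v₁ ≫ t₁ = v₂ ≫ t₂) (h' : v₁' ≫ t₁ = v₂' ≫ t₂) :
    ∃ (Q : C) (x : Q ⟶ Z) (x' : Q ⟶ Z'),
      S x' ∧ x ≫ v₁ = x' ≫ v₁' ∧ x ≫ v₂ = x' ≫ v₂' := by
  obtain ⟨Q, x, x', -, hx', hsq⟩ := h23.exists_comm_sq_of_cospan hv₁ hv₁'
  have ht₂_eq : (x ≫ v₂) ≫ t₂ = (x' ≫ v₂') ≫ t₂ := by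
    rw [Category.assoc, ← h, ← Category.assoc, hsq, Category.assoc, h', Category.assoc]
  obtain ⟨Q', r, hr, hrr⟩ :=
    MorphismProperty.HasRightCalculusOfFractions.ext _ _ t₂ ht₂ ht₂_eq
  refine ⟨Q', r ≫ x, r ≫ x', S.comp_mem _ _ hr hx', ?_, ?_⟩
  · rw [Category.assoc, hsq, Category.assoc]
  · simpa only [Category.assoc] using hrr

end TwoOutOfThree

namespace Triplet

variable {S : MorphismProperty D} {T : AddBifunctor D} {Cc A : D}

/-- The composites `s = τᵢ.s ≫ uᵢ` and `t = vᵢ ≫ τᵢ.t` of `TripletRel` are not stored: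
they are determined by the other data. -/
structure CommonDenominator (τ₁ τ₂ : Triplet S T Cc A) where
  Z : D
  X : D
  u₁ : τ₁.X ⟶ X
  v₁ : Z ⟶ τ₁.Z
  u₂ : τ₂.X ⟶ X
  v₂ : Z ⟶ τ₂.Z
  hu₁ : S u₁
  hv₁ : S v₁
  hu₂ : S u₂
  hv₂ : S v₂
  fac_s : τ₁.s ≫ u₁ = τ₂.s ≫ u₂
  fac_t : v₁ ≫ τ₁.t = v₂ ≫ τ₂.t

namespace CommonDenominator

variable {τ₁ τ₂ τ₃ : Triplet S T Cc A}

def Agrees (d : CommonDenominator τ₁ τ₂) : Prop :=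
  T.pull d.v₁ (T.push d.u₁ τ₁.δ) = T.pull d.v₂ (T.push d.u₂ τ₂.δ)

def refl [S.ContainsIdentities] (τ : Triplet S T Cc A) : CommonDenominator τ τ :=
  ⟨τ.Z, τ.X, 𝟙 _, 𝟙 _, 𝟙 _, 𝟙 _, S.id_mem _, S.id_mem _, S.id_mem _, S.id_mem _, rfl, rfl⟩

def symm (d : CommonDenominator τ₁ τ₂) : CommonDenominator τ₂ τ₁ :=
  ⟨d.Z, d.X, d.u₂, d.v₂, d.u₁, d.v₁, d.hu₂, d.hv₂, d.hu₁, d.hv₁, d.fac_s.symm, d.fac_t.symm⟩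

lemma agrees_refl [S.ContainsIdentities] (τ : Triplet S T Cc A) : (refl τ).Agrees := rfl

lemma Agrees.symm {d : CommonDenominator τ₁ τ₂} (h : d.Agrees) : d.symm.Agrees := Eq.symm h

lemma exists_agrees_trans [S.HasLeftCalculusOfFractions] [S.HasRightCalculusOfFractions]
    (h23 : TwoOutOfThree S) {d : CommonDenominator τ₁ τ₂} {d' : CommonDenominator τ₂ τ₃}
    (h : d.Agrees) (h' : d'.Agrees) : ∃ d'' : CommonDenominator τ₁ τ₃, d''.Agrees := by
  obtain ⟨P, w, w', hw, hw', hu⟩ := h23.exists_comm_sq_of_span d.hu₂ d'.hu₁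
  obtain ⟨Q, x, x', hx, hx', hv⟩ := h23.exists_comm_sq_of_cospan d.hv₂ d'.hv₁
  refine ⟨⟨Q, P, d.u₁ ≫ w, x ≫ d.v₁, d'.u₂ ≫ w', x' ≫ d'.v₂,
    S.comp_mem _ _ d.hu₁ hw, S.comp_mem _ _ hx d.hv₁,
    S.comp_mem _ _ d'.hu₂ hw', S.comp_mem _ _ hx' d'.hv₂, ?_, ?_⟩, ?_⟩
  · simp only [← Category.assoc, d.fac_s, ← d'.fac_s]
    simp only [Category.assoc, hu]
  · simp only [Category.assoc, d.fac_t, ← d'.fac_t]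
    simp only [← Category.assoc, hv]
  · calc T.pull (x ≫ d.v₁) (T.push (d.u₁ ≫ w) τ₁.δ)
        = T.pull x (T.push w (T.pull d.v₂ (T.push d.u₂ τ₂.δ))) := by
          rw [AddBifunctor.pull_push_comp, h]
      _ = T.pull x' (T.push w' (T.pull d'.v₁ (T.push d'.u₁ τ₂.δ))) :=
          AddBifunctor.pull_push_pull_push_eq_of_comp_eq hv hu _
      _ = T.pull (x' ≫ d'.v₂) (T.push (d'.u₂ ≫ w') τ₃.δ) := by
          rw [AddBifunctor.pull_push_comp, h']

lemma Agrees.of_agrees [S.HasLeftCalculusOfFractions] [S.HasRightCalculusOfFractions]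
    (h23 : TwoOutOfThree S)
    (hsat : ∀ {Z' Z X X' : D} (u : X ⟶ X') (v : Z' ⟶ Z) (δ : T.E Z X),
      S u → S v → T.pull v (T.push u δ) = 0 → δ = 0)
    {d : CommonDenominator τ₁ τ₂} (h : d.Agrees) (d' : CommonDenominator τ₁ τ₂) :
    d'.Agrees := by
  obtain ⟨P, w, w', hw', hu₁, hu₂⟩ :=
    h23.exists_comm_sq_of_span_pair τ₂.hs d.hu₁ d'.hu₁ d.fac_s d'.fac_s
  obtain ⟨Q, x, x', hx', hv₁, hv₂⟩ :=
    h23.exists_comm_sq_of_cospan_pair τ₂.ht d.hv₁ d'.hv₁ d.fac_t d'.fac_t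
  refine sub_eq_zero.mp (hsat w' x' _ hw' hx' ?_)
  rw [AddBifunctor.push_sub, AddBifunctor.pull_sub, sub_eq_zero,
    ← AddBifunctor.pull_push_pull_push_eq_of_comp_eq hv₁ hu₁, h,
    AddBifunctor.pull_push_pull_push_eq_of_comp_eq hv₂ hu₂]

end CommonDenominator

end Triplet

lemma tripletRel_iff {S : MorphismProperty D} [S.IsMultiplicative] {T : AddBifunctor D}
    {Cc A : D} {τ₁ τ₂ : Triplet S T Cc A} :
    TripletRel S T Cc A τ₁ τ₂ ↔ ∃ d : τ₁.CommonDenominator τ₂, d.Agrees := by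
  constructor
  · rintro ⟨Z, X, t, s, u₁, v₁, u₂, v₂, -, -, hu₁, hv₁, hu₂, hv₂, rfl, fac_s, rfl, fac_t, h⟩
    exact ⟨⟨Z, X, u₁, v₁, u₂, v₂, hu₁, hv₁, hu₂, hv₂, fac_s, fac_t⟩, h⟩
  · rintro ⟨d, h⟩
    exact ⟨d.Z, d.X, d.v₁ ≫ τ₁.t, τ₁.s ≫ d.u₁, d.u₁, d.v₁, d.u₂, d.v₂,
      S.comp_mem _ _ d.hv₁ τ₁.ht, S.comp_mem _ _ τ₁.hs d.hu₁, d.hu₁, d.hv₁, d.hu₂, d.hv₂,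
      rfl, d.fac_s, rfl, d.fac_t, h⟩

/-- For a multiplicative system `S` satisfying 2-out-of-3 and an additive
bifunctor `E` such that every extension killed by pulling–pushing along
morphisms of `S` vanishes, the common-denominator relation on triplets is
independent of the chosen common denominator, and it is an equivalence
relation. -/
theorem tripletRel_equivalence (S : MorphismProperty D)
    [S.HasLeftCalculusOfFractions] [S.HasRightCalculusOfFractions]
    (h23 : TwoOutOfThree S) (T : AddBifunctor D)
    (hsat : ∀ {Z' Z X X' : D} (u : X ⟶ X') (v : Z' ⟶ Z) (δ : T.E Z X),
      S u → S v → T.pull v (T.push u δ) = 0 → δ = 0)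
    (Cc A : D) :
    Equivalence (TripletRel S T Cc A) ∧
    ∀ T₁ T₂ : Triplet S T Cc A, TripletRel S T Cc A T₁ T₂ →
      ∀ (Z X : D) (t : Z ⟶ Cc) (s : A ⟶ X) (u₁ : T₁.X ⟶ X) (v₁ : Z ⟶ T₁.Z)
        (u₂ : T₂.X ⟶ X) (v₂ : Z ⟶ T₂.Z),
        S t → S s → S u₁ → S v₁ → S u₂ → S v₂ →
        s = T₁.s ≫ u₁ → s = T₂.s ≫ u₂ → t = v₁ ≫ T₁.t → t = v₂ ≫ T₂.t →
        T.pull v₁ (T.push u₁ T₁.δ) = T.pull v₂ (T.push u₂ T₂.δ) := by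
  refine ⟨⟨fun τ ↦ tripletRel_iff.2 ⟨_, Triplet.CommonDenominator.agrees_refl τ⟩, ?_, ?_⟩, ?_⟩
  · intro τ₁ τ₂ h
    obtain ⟨d, hd⟩ := tripletRel_iff.1 h
    exact tripletRel_iff.2 ⟨d.symm, hd.symm⟩
  · intro τ₁ τ₂ τ₃ h h'
    obtain ⟨d, hd⟩ := tripletRel_iff.1 h
    obtain ⟨d', hd'⟩ := tripletRel_iff.1 h'
    exact tripletRel_iff.2 (Triplet.CommonDenominator.exists_agrees_trans h23 hd hd')
  · rintro τ₁ τ₂ h Z X t s u₁ v₁ u₂ v₂ - - hu₁ hv₁ hu₂ hv₂ rfl fac_s rfl fac_t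
    obtain ⟨d, hd⟩ := tripletRel_iff.1 h
    exact hd.of_agrees h23 hsat ⟨Z, X, u₁, v₁, u₂, v₂, hu₁, hv₁, hu₂, hv₂, fac_s, fac_t⟩
end

section
/- With D, S, E as above, for each pair of objects (C, A), the set Ẽ(C, A) of equivalence classes [t \ δ / s] of triplets under the common-denominator equivalence relation carries a natural abelian group structure: the sum of [t₁ \ δ₁ / s₁] and [t₂ \ δ₂ / s₂] is [t \ ρ₁ + ρ₂ / s], where (t, s) is any common denominator with [t_i \ δ_i / s_i] = [t \ ρ_i / s]; the zero element is [id \ 0 / id], and the inverse of [t \ δ / s] is [t \ −δ / s]. This addition is well defined (independent of the common denominator chosen). -/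
open CategoryTheory

universe v u

variable {D : Type u} [Category.{v} D] [Preadditive D]

/-!
By the Ore conditions (2-out-of-3 keeping the completing morphisms in `S`) any two roofs
`C ⇐ Z`, `X ⇐ A` have a common refinement, and by the cancellation part of the calculus of
fractions two refinements of the same roof become equal after refining once more. Hence the
sum of two triplets, computed on any common refinement of their roofs, has a class independent
of all choices and of the representatives. On a common roof the operations are those of the
abelian group `E(Z, X)`, so the group axioms are inherited from it.
-/

section Roofs

variable {C : Type*} [Category C] {S : MorphismProperty C}

lemma TwoOutOfThree.exists_square_of_cospan [S.HasRightCalculusOfFractions]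
    (h23 : TwoOutOfThree S) {Z₁ Z₂ Y : C} {t₁ : Z₁ ⟶ Y} {t₂ : Z₂ ⟶ Y} (h₁ : S t₁) (h₂ : S t₂) :
    ∃ (Z : C) (v₁ : Z ⟶ Z₁) (v₂ : Z ⟶ Z₂), S v₁ ∧ S v₂ ∧ v₁ ≫ t₁ = v₂ ≫ t₂ := by
  obtain ⟨ψ, hψ⟩ := (MorphismProperty.LeftFraction.mk t₁ t₂ h₂).exists_rightFraction
  exact ⟨ψ.X', ψ.s, ψ.f, ψ.hs, h23.2.2 ψ.f t₂ h₂ (hψ ▸ S.comp_mem _ _ ψ.hs h₁), hψ⟩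

lemma TwoOutOfThree.exists_square_of_span [S.HasLeftCalculusOfFractions]
    (h23 : TwoOutOfThree S) {A' X₁ X₂ : C} {s₁ : A' ⟶ X₁} {s₂ : A' ⟶ X₂} (h₁ : S s₁) (h₂ : S s₂) :
    ∃ (X : C) (u₁ : X₁ ⟶ X) (u₂ : X₂ ⟶ X), S u₁ ∧ S u₂ ∧ s₁ ≫ u₁ = s₂ ≫ u₂ := by
  obtain ⟨ψ, hψ⟩ := (MorphismProperty.RightFraction.mk s₁ h₁ s₂).exists_leftFraction
  exact ⟨ψ.Y', ψ.f, ψ.s, h23.2.1 s₁ ψ.f h₁ (hψ ▸ S.comp_mem _ _ h₂ ψ.hs), ψ.hs, hψ.symm⟩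

variable (S) in
/-- The denominators `C ⇐t Z` and `X ⇐s A` of a triplet. -/
structure Roof (Cc A : C) where
  Z : C
  X : C
  t : Z ⟶ Cc
  s : A ⟶ X
  ht : S t
  hs : S s

namespace Roof

variable {Cc A : C}

def trivial [S.ContainsIdentities] : Roof S Cc A :=
  ⟨Cc, A, 𝟙 Cc, 𝟙 A, S.id_mem Cc, S.id_mem A⟩

/-- `r'` refines `r`: its denominators factor through those of `r` via morphisms of `S`. -/
@[ext]
structure Refinement (r r' : Roof S Cc A) where
  v : r'.Z ⟶ r.Z
  u : r.X ⟶ r'.X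
  hv : S v
  hu : S u
  ht : r'.t = v ≫ r.t
  hs : r'.s = r.s ≫ u

namespace Refinement

variable {r r' r'' r''' : Roof S Cc A}

def id [S.ContainsIdentities] (r : Roof S Cc A) : r.Refinement r :=
  ⟨𝟙 _, 𝟙 _, S.id_mem _, S.id_mem _, (Category.id_comp _).symm, (Category.comp_id _).symm⟩

def comp [S.IsStableUnderComposition] (f : r.Refinement r') (g : r'.Refinement r'') :
    r.Refinement r'' :=
  ⟨g.v ≫ f.v, f.u ≫ g.u, S.comp_mem _ _ g.hv f.hv, S.comp_mem _ _ f.hu g.hu,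
    by rw [g.ht, f.ht, Category.assoc], by rw [g.hs, f.hs, Category.assoc]⟩

def fromTrivial [S.ContainsIdentities] (r : Roof S Cc A) : trivial.Refinement r :=
  ⟨r.t, r.s, r.ht, r.hs, (Category.comp_id _).symm, (Category.id_comp _).symm⟩

lemma comp_assoc [S.IsStableUnderComposition] (f : r.Refinement r') (g : r'.Refinement r'')
    (h : r''.Refinement r''') : (f.comp g).comp h = f.comp (g.comp h) := by
  ext <;> simp [comp]

lemma exists_comp_eq_comp [S.HasLeftCalculusOfFractions] [S.HasRightCalculusOfFractions]
    (f g : r.Refinement r') :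
    ∃ (r'' : Roof S Cc A) (e : r'.Refinement r''), f.comp e = g.comp e := by
  obtain ⟨Z, c, hc, hcv⟩ :=
    MorphismProperty.HasRightCalculusOfFractions.ext f.v g.v r.t r.ht (f.ht.symm.trans g.ht)
  obtain ⟨X, x, hx, hxu⟩ :=
    MorphismProperty.HasLeftCalculusOfFractions.ext f.u g.u r.s r.hs (f.hs.symm.trans g.hs)
  exact ⟨⟨Z, X, c ≫ r'.t, r'.s ≫ x, S.comp_mem _ _ hc r'.ht, S.comp_mem _ _ r'.hs hx⟩,
    ⟨c, x, hc, hx, rfl, rfl⟩, by ext <;> simp [comp, hcv, hxu]⟩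

lemma exists_comp_eq_comp₂ [S.HasLeftCalculusOfFractions] [S.HasRightCalculusOfFractions]
    {r₁ r₂ : Roof S Cc A} (f₁ g₁ : r₁.Refinement r) (f₂ g₂ : r₂.Refinement r) :
    ∃ (r' : Roof S Cc A) (e : r.Refinement r'),
      f₁.comp e = g₁.comp e ∧ f₂.comp e = g₂.comp e := by
  obtain ⟨r', e₁, h₁⟩ := exists_comp_eq_comp f₁ g₁
  obtain ⟨r'', e₂, h₂⟩ := exists_comp_eq_comp (f₂.comp e₁) (g₂.comp e₁)
  exact ⟨r'', e₁.comp e₂, by rw [← comp_assoc, h₁, comp_assoc],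
    by rw [← comp_assoc, h₂, comp_assoc]⟩

end Refinement

lemma nonempty_common_refinement [S.HasLeftCalculusOfFractions]
    [S.HasRightCalculusOfFractions] (h23 : TwoOutOfThree S) (r₁ r₂ : Roof S Cc A) :
    Nonempty (Σ r : Roof S Cc A, r₁.Refinement r × r₂.Refinement r) := by
  obtain ⟨Z, v₁, v₂, hv₁, hv₂, hv⟩ := h23.exists_square_of_cospan r₁.ht r₂.ht
  obtain ⟨X, u₁, u₂, hu₁, hu₂, hu⟩ := h23.exists_square_of_span r₁.hs r₂.hs
  exact ⟨⟨⟨Z, X, v₁ ≫ r₁.t, r₁.s ≫ u₁, S.comp_mem _ _ hv₁ r₁.ht, S.comp_mem _ _ r₁.hs hu₁⟩,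
    ⟨v₁, u₁, hv₁, hu₁, rfl, rfl⟩, ⟨v₂, u₂, hv₂, hu₂, hv, hu⟩⟩⟩

end Roof

end Roofs

namespace Roof

variable {S : MorphismProperty D} {Cc A : D} {r r' r'' : Roof S Cc A}

abbrev triplet {T : AddBifunctor D} (r : Roof S Cc A) (δ : T.E r.Z r.X) : Triplet S T Cc A :=
  ⟨r.Z, r.X, r.t, r.s, r.ht, r.hs, δ⟩

namespace Refinement

def transport (T : AddBifunctor D) (f : r.Refinement r') : T.E r.Z r.X →+ T.E r'.Z r'.X :=
  AddMonoidHom.mk' (fun δ => T.pull f.v (T.push f.u δ)) fun δ δ' => by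
    rw [T.push_add, T.pull_add]

lemma transport_id [S.ContainsIdentities] (T : AddBifunctor D) (δ : T.E r.Z r.X) :
    (id r).transport T δ = δ := by
  simp [transport, id, T.push_id, T.pull_id]

lemma transport_comp [S.IsStableUnderComposition] (T : AddBifunctor D) (f : r.Refinement r')
    (g : r'.Refinement r'') (δ : T.E r.Z r.X) :
    (f.comp g).transport T δ = g.transport T (f.transport T δ) := by
  simp [transport, comp, T.pull_comp, T.push_comp, T.pull_push]

end Refinement

end Roof

section Triplets

variable {S : MorphismProperty D} {T : AddBifunctor D} {Cc A : D}

abbrev Triplet.roof (Q : Triplet S T Cc A) : Roof S Cc A :=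
  ⟨Q.Z, Q.X, Q.t, Q.s, Q.ht, Q.hs⟩

lemma tripletRel_iff_s7 {Q₁ Q₂ : Triplet S T Cc A} :
    TripletRel S T Cc A Q₁ Q₂ ↔ ∃ (r : Roof S Cc A) (f₁ : Q₁.roof.Refinement r)
      (f₂ : Q₂.roof.Refinement r), f₁.transport T Q₁.δ = f₂.transport T Q₂.δ := by
  constructor
  · rintro ⟨Z, X, t, s, u₁, v₁, u₂, v₂, ht, hs, hu₁, hv₁, hu₂, hv₂, hs₁, hs₂, ht₁, ht₂, h⟩
    exact ⟨⟨Z, X, t, s, ht, hs⟩, ⟨v₁, u₁, hv₁, hu₁, ht₁, hs₁⟩, ⟨v₂, u₂, hv₂, hu₂, ht₂, hs₂⟩, h⟩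
  · rintro ⟨r, f₁, f₂, h⟩
    exact ⟨r.Z, r.X, r.t, r.s, f₁.u, f₁.v, f₂.u, f₂.v, r.ht, r.hs, f₁.hu, f₁.hv, f₂.hu, f₂.hv,
      f₁.hs, f₂.hs, f₁.ht, f₂.ht, h⟩

end Triplets

abbrev TildeE (S : MorphismProperty D) (T : AddBifunctor D) (Cc A : D) : Type _ :=
  Quot (TripletRel S T Cc A)

namespace TildeE

open Roof Refinement

variable {S : MorphismProperty D} {T : AddBifunctor D} {Cc A : D}

lemma mk_transport [S.ContainsIdentities] {r r' : Roof S Cc A} (f : r.Refinement r')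
    (δ : T.E r.Z r.X) :
    (Quot.mk _ (r'.triplet (f.transport T δ)) : TildeE S T Cc A) = Quot.mk _ (r.triplet δ) :=
  Quot.sound (tripletRel_iff_s7.2 ⟨r', Refinement.id r', f, transport_id T _⟩)

def sumOn {Q₁ Q₂ : Triplet S T Cc A} {r : Roof S Cc A} (f₁ : Q₁.roof.Refinement r)
    (f₂ : Q₂.roof.Refinement r) : Triplet S T Cc A :=
  r.triplet (f₁.transport T Q₁.δ + f₂.transport T Q₂.δ)

def zero [S.ContainsIdentities] : TildeE S T Cc A :=
  Quot.mk _ (Roof.trivial.triplet 0)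

lemma mk_triplet_zero [S.ContainsIdentities] (r : Roof S Cc A) :
    Quot.mk _ (r.triplet 0) = (zero : TildeE S T Cc A) := by
  rw [zero, ← mk_transport (fromTrivial r), map_zero]

def neg : TildeE S T Cc A → TildeE S T Cc A :=
  Quot.map (fun Q => Q.roof.triplet (-Q.δ)) fun Q₁ Q₂ h => by
    obtain ⟨r, f₁, f₂, hf⟩ := tripletRel_iff_s7.1 h
    exact tripletRel_iff_s7.2 ⟨r, f₁, f₂, by simp only [map_neg, hf]⟩

section CalculusOfFractions

variable [S.HasLeftCalculusOfFractions] [S.HasRightCalculusOfFractions] (h23 : TwoOutOfThree S)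
include h23

/-- On a common refinement of the two roofs where the two pairs of refinements agree, both
sums are transported to the same extension. -/
lemma mk_sumOn_eq_mk_sumOn {Q₁ Q₂ : Triplet S T Cc A} {r r' : Roof S Cc A}
    (f₁ : Q₁.roof.Refinement r) (f₂ : Q₂.roof.Refinement r)
    (g₁ : Q₁.roof.Refinement r') (g₂ : Q₂.roof.Refinement r') :
    (Quot.mk _ (sumOn f₁ f₂) : TildeE S T Cc A) = Quot.mk _ (sumOn g₁ g₂) := by
  obtain ⟨⟨r'', h, h'⟩⟩ := nonempty_common_refinement h23 r r'
  obtain ⟨r''', e, he₁, he₂⟩ :=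
    exists_comp_eq_comp₂ (f₁.comp h) (g₁.comp h') (f₂.comp h) (g₂.comp h')
  refine Quot.sound (tripletRel_iff_s7.2 ⟨r''', h.comp e, h'.comp e, ?_⟩)
  show (h.comp e).transport T (f₁.transport T Q₁.δ + f₂.transport T Q₂.δ) =
    (h'.comp e).transport T (g₁.transport T Q₁.δ + g₂.transport T Q₂.δ)
  rw [map_add, map_add, ← transport_comp, ← transport_comp, ← transport_comp, ← transport_comp,
    ← comp_assoc, ← comp_assoc, ← comp_assoc, ← comp_assoc, he₁, he₂]

noncomputable def addRep (Q₁ Q₂ : Triplet S T Cc A) : Triplet S T Cc A :=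
  let c := Classical.choice (nonempty_common_refinement h23 Q₁.roof Q₂.roof)
  sumOn c.2.1 c.2.2

lemma mk_addRep {Q₁ Q₂ : Triplet S T Cc A} {r : Roof S Cc A} (f₁ : Q₁.roof.Refinement r)
    (f₂ : Q₂.roof.Refinement r) :
    (Quot.mk _ (addRep h23 Q₁ Q₂) : TildeE S T Cc A) = Quot.mk _ (sumOn f₁ f₂) :=
  mk_sumOn_eq_mk_sumOn h23 _ _ _ _

lemma mk_addRep_comm (Q₁ Q₂ : Triplet S T Cc A) :
    (Quot.mk _ (addRep h23 Q₁ Q₂) : TildeE S T Cc A) = Quot.mk _ (addRep h23 Q₂ Q₁) := by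
  obtain ⟨⟨r, f₁, f₂⟩⟩ := nonempty_common_refinement h23 Q₁.roof Q₂.roof
  rw [mk_addRep h23 f₁ f₂, mk_addRep h23 f₂ f₁, sumOn, sumOn, _root_.add_comm]

lemma mk_addRep_congr_left {Q₁ Q₁' : Triplet S T Cc A} (h : TripletRel S T Cc A Q₁ Q₁')
    (Q₂ : Triplet S T Cc A) :
    (Quot.mk _ (addRep h23 Q₁ Q₂) : TildeE S T Cc A) = Quot.mk _ (addRep h23 Q₁' Q₂) := by
  obtain ⟨r, f, f', hf⟩ := tripletRel_iff_s7.1 h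
  obtain ⟨⟨r', g, g₂⟩⟩ := nonempty_common_refinement h23 r Q₂.roof
  rw [mk_addRep h23 (f.comp g) g₂, mk_addRep h23 (f'.comp g) g₂, sumOn, sumOn,
    transport_comp, transport_comp, hf]

noncomputable def add : TildeE S T Cc A → TildeE S T Cc A → TildeE S T Cc A :=
  Quot.lift₂ (fun Q₁ Q₂ => Quot.mk _ (addRep h23 Q₁ Q₂))
    (fun Q₁ _ _ h => by
      simp only [mk_addRep_comm h23 Q₁, mk_addRep_congr_left h23 h])
    (fun _ _ Q₂ h => mk_addRep_congr_left h23 h Q₂)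

lemma add_mk_triplet (r : Roof S Cc A) (δ₁ δ₂ : T.E r.Z r.X) :
    add h23 (Quot.mk _ (r.triplet δ₁)) (Quot.mk _ (r.triplet δ₂)) =
      Quot.mk _ (r.triplet (δ₁ + δ₂)) := by
  rw [add, Quot.lift₂_mk,
    mk_addRep h23 (Q₁ := r.triplet δ₁) (Q₂ := r.triplet δ₂) (Refinement.id r) (Refinement.id r),
    sumOn, transport_id, transport_id]

lemma exists_eq_mk_triplet₃ (x y z : TildeE S T Cc A) :
    ∃ (r : Roof S Cc A) (δ₁ δ₂ δ₃ : T.E r.Z r.X), x = Quot.mk _ (r.triplet δ₁) ∧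
      y = Quot.mk _ (r.triplet δ₂) ∧ z = Quot.mk _ (r.triplet δ₃) := by
  obtain ⟨Q₁, rfl⟩ := Quot.exists_rep x
  obtain ⟨Q₂, rfl⟩ := Quot.exists_rep y
  obtain ⟨Q₃, rfl⟩ := Quot.exists_rep z
  obtain ⟨⟨r, f₁, f₂⟩⟩ := nonempty_common_refinement h23 Q₁.roof Q₂.roof
  obtain ⟨⟨r', g, f₃⟩⟩ := nonempty_common_refinement h23 r Q₃.roof
  exact ⟨r', (f₁.comp g).transport T Q₁.δ, (f₂.comp g).transport T Q₂.δ, f₃.transport T Q₃.δ,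
    (mk_transport (f₁.comp g) Q₁.δ).symm, (mk_transport (f₂.comp g) Q₂.δ).symm,
    (mk_transport f₃ Q₃.δ).symm⟩

lemma add_comm (x y : TildeE S T Cc A) : add h23 x y = add h23 y x := by
  obtain ⟨Q₁, rfl⟩ := Quot.exists_rep x
  obtain ⟨Q₂, rfl⟩ := Quot.exists_rep y
  exact mk_addRep_comm h23 Q₁ Q₂

lemma add_assoc (x y z : TildeE S T Cc A) :
    add h23 (add h23 x y) z = add h23 x (add h23 y z) := by
  obtain ⟨r, δ₁, δ₂, δ₃, rfl, rfl, rfl⟩ := exists_eq_mk_triplet₃ h23 x y z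
  simp only [add_mk_triplet, _root_.add_assoc]

lemma zero_add (x : TildeE S T Cc A) : add h23 zero x = x := by
  obtain ⟨Q, rfl⟩ := Quot.exists_rep x
  rw [← mk_triplet_zero Q.roof, add_mk_triplet, _root_.zero_add]

lemma neg_add_cancel (x : TildeE S T Cc A) : add h23 (neg x) x = zero := by
  obtain ⟨Q, rfl⟩ := Quot.exists_rep x
  exact (add_mk_triplet h23 Q.roof (-Q.δ) Q.δ).trans
    (by rw [_root_.neg_add_cancel, mk_triplet_zero])

end CalculusOfFractions

end TildeE

theorem tildeE_addCommGroup_general (S : MorphismProperty D)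
    [S.HasLeftCalculusOfFractions] [S.HasRightCalculusOfFractions]
    (h23 : TwoOutOfThree S) (T : AddBifunctor D)
    (Cc A : D) :
    ∃ (add : Quot (TripletRel S T Cc A) → Quot (TripletRel S T Cc A) →
        Quot (TripletRel S T Cc A))
      (zero : Quot (TripletRel S T Cc A))
      (neg : Quot (TripletRel S T Cc A) → Quot (TripletRel S T Cc A)),
      (∀ x y z, add (add x y) z = add x (add y z)) ∧
      (∀ x y, add x y = add y x) ∧
      (∀ x, add zero x = x) ∧
      (∀ x, add (neg x) x = zero) ∧
      zero = Quot.mk _ ⟨Cc, A, 𝟙 Cc, 𝟙 A, S.id_mem Cc, S.id_mem A, 0⟩ ∧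
      (∀ (Z X : D) (t : Z ⟶ Cc) (s : A ⟶ X) (ht : S t) (hs : S s)
          (δ₁ δ₂ : T.E Z X),
        add (Quot.mk _ ⟨Z, X, t, s, ht, hs, δ₁⟩) (Quot.mk _ ⟨Z, X, t, s, ht, hs, δ₂⟩)
          = Quot.mk _ ⟨Z, X, t, s, ht, hs, δ₁ + δ₂⟩) ∧
      (∀ (Z X : D) (t : Z ⟶ Cc) (s : A ⟶ X) (ht : S t) (hs : S s) (δ : T.E Z X),
        neg (Quot.mk _ ⟨Z, X, t, s, ht, hs, δ⟩)
          = Quot.mk _ ⟨Z, X, t, s, ht, hs, -δ⟩) :=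
  ⟨TildeE.add h23, TildeE.zero, TildeE.neg, TildeE.add_assoc h23, TildeE.add_comm h23,
    TildeE.zero_add h23, TildeE.neg_add_cancel h23, rfl,
    fun Z X t s ht hs => TildeE.add_mk_triplet h23 ⟨Z, X, t, s, ht, hs⟩,
    fun _ _ _ _ _ _ _ => rfl⟩

/-- The set `Ẽ(C, A)` of equivalence classes of triplets carries an abelian
group structure: addition is computed via common denominators
(`[t\δ₁/s] + [t\δ₂/s] = [t\(δ₁+δ₂)/s]`), the zero element is `[id\0/id]` and
the inverse of `[t\δ/s]` is `[t\(-δ)/s]`. -/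
theorem tildeE_addCommGroup (S : MorphismProperty D)
    [S.HasLeftCalculusOfFractions] [S.HasRightCalculusOfFractions]
    (h23 : TwoOutOfThree S) (T : AddBifunctor D)
    (hsat : ∀ {Z' Z X X' : D} (u : X ⟶ X') (v : Z' ⟶ Z) (δ : T.E Z X),
      S u → S v → T.pull v (T.push u δ) = 0 → δ = 0)
    (Cc A : D) :
    ∃ (add : Quot (TripletRel S T Cc A) → Quot (TripletRel S T Cc A) →
        Quot (TripletRel S T Cc A))
      (zero : Quot (TripletRel S T Cc A))
      (neg : Quot (TripletRel S T Cc A) → Quot (TripletRel S T Cc A)),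
      (∀ x y z, add (add x y) z = add x (add y z)) ∧
      (∀ x y, add x y = add y x) ∧
      (∀ x, add zero x = x) ∧
      (∀ x, add (neg x) x = zero) ∧
      zero = Quot.mk _ ⟨Cc, A, 𝟙 Cc, 𝟙 A, S.id_mem Cc, S.id_mem A, 0⟩ ∧
      (∀ (Z X : D) (t : Z ⟶ Cc) (s : A ⟶ X) (ht : S t) (hs : S s)
          (δ₁ δ₂ : T.E Z X),
        add (Quot.mk _ ⟨Z, X, t, s, ht, hs, δ₁⟩) (Quot.mk _ ⟨Z, X, t, s, ht, hs, δ₂⟩)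
          = Quot.mk _ ⟨Z, X, t, s, ht, hs, δ₁ + δ₂⟩) ∧
      (∀ (Z X : D) (t : Z ⟶ Cc) (s : A ⟶ X) (ht : S t) (hs : S s) (δ : T.E Z X),
        neg (Quot.mk _ ⟨Z, X, t, s, ht, hs, δ⟩)
          = Quot.mk _ ⟨Z, X, t, s, ht, hs, -δ⟩) :=
  tildeE_addCommGroup_general S h23 T Cc A
end
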